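/- arXiv:2312.12953 — 10 statements merged into one kernel-verified Lean document; each statement's English description precedes it below -/
import Mathlib

section
/- Let A be a 3×3 matrix over a commutative ring with rows (a,b,c), (d,e,f), (g,h,i), with det A = 0, and suppose the four 2×2 contiguous minors ae-bd, bf-ce, dh-eg, ei-fh are all equal to 1. Then d + f = (af - cd)·e and af - cd = di - fg. -/
theorem lemma_L {R : Type*} [CommRing R] (a b c d e f g h i : R)
    (hdet : Matrix.det !![a, b, c; d, e, f; g, h, i] = 0)
    (h1 : a * e - b * d = 1) (h2 : b * f - c * e = 1)
    (h3 : d * h - e * g = 1) (h4 : e * i - f * h = 1) :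
    d + f = (a * f - c * d) * e ∧ a * f - c * d = d * i - f * g := by
  have hdet' : a * e * i - a * f * h - b * d * i + b * f * g + c * d * h - c * e * g = 0 := by
    rw [Matrix.det_fin_three] at hdet
    simpa using hdet
  refine ⟨by linear_combination (-f) * h1 + (-d) * h2, ?_⟩
  linear_combination (-d) * hdet' + (d*i - f*g) * h1 + (c*d - a*f) * h3
end

section
/- Given a bi-infinite sequence (eᵢ) in R and pairs (a*,b*), (c*,d*) with a*d* - b*c* = 1, there is a unique bi-infinite sequence of pairs (aᵢ,bᵢ) with aᵢbᵢ₊₁ - bᵢaᵢ₊₁ = 1 for all i, (a₀,b₀)=(a*,b*), (a₁,b₁)=(c*,d*), and aᵢ₋₁+aᵢ₊₁ = eᵢaᵢ, bᵢ₋₁+bᵢ₊₁ = eᵢbᵢ for all i ∈ ℤ. -/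
/-!
Consecutive pairs `(f i, f (i + 1))` of a solution of `f (i - 1) + f (i + 1) = e i • f i`
evolve by the invertible map `(u, v) ↦ (v, e (i + 1) • v - u)`, so a solution propagates
uniquely in both directions from `(f 0, f 1)`. This map preserves the determinant
`u.1 * v.2 - u.2 * v.1`, which is therefore `a * d - b * c = 1` along the whole path.
-/

def Int.orbitOfEquiv {α : Type*} (T : ℤ → α ≃ α) (x : α) (z : ℤ) : α :=
  z.inductionOn' 0 x (fun k _ y => T k y) (fun k _ y => (T (k - 1)).symm y)

namespace Int.orbitOfEquiv

variable {α : Type*} (T : ℤ → α ≃ α) (x : α)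

theorem apply_zero : orbitOfEquiv T x 0 = x :=
  Int.inductionOn'_self

theorem apply_add_one (i : ℤ) : orbitOfEquiv T x (i + 1) = T i (orbitOfEquiv T x i) := by
  rcases le_or_gt 0 i with hi | hi
  · exact Int.inductionOn'_add_one hi
  · have h := Int.inductionOn'_sub_one (motive := fun _ => α) (b := 0) (zero := x)
      (succ := fun k _ y => T k y) (pred := fun k _ y => (T (k - 1)).symm y)
      (show i + 1 ≤ 0 by omega)
    simp only [add_sub_cancel_right] at h
    simp only [orbitOfEquiv, h, Equiv.apply_symm_apply]

theorem existsUnique :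
    ∃! p : ℤ → α, p 0 = x ∧ ∀ i, p (i + 1) = T i (p i) := by
  refine ⟨orbitOfEquiv T x, ⟨apply_zero T x, apply_add_one T x⟩,
    fun q ⟨hq0, hq⟩ => funext fun i => ?_⟩
  induction i with
  | zero => rw [hq0, apply_zero]
  | succ n ih => rw [hq, apply_add_one, ih]
  | pred n ih =>
    apply (T (-n - 1)).injective
    rw [← hq, ← apply_add_one, sub_add_cancel, ih]

end Int.orbitOfEquiv

section ThreeTermRecurrence

variable {R M : Type*} [Ring R] [AddCommGroup M] [Module R M]

def transferEquiv (t : R) : M × M ≃ M × M where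
  toFun p := (p.2, t • p.2 - p.1)
  invFun p := (t • p.1 - p.2, p.1)
  left_inv p := by simp
  right_inv p := by simp

theorem transferEquiv_apply (t : R) (p : M × M) : transferEquiv t p = (p.2, t • p.2 - p.1) := rfl

theorem forall_add_eq_smul_iff_transferEquiv (e : ℤ → R) (f : ℤ → M) :
    (∀ i, f (i - 1) + f (i + 1) = e i • f i) ↔
      ∀ i, (f (i + 1), f (i + 1 + 1)) = transferEquiv (e (i + 1)) (f i, f (i + 1)) := by
  simp only [transferEquiv_apply, Prod.mk.injEq, true_and, eq_sub_iff_add_eq']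
  constructor
  · intro h i
    simpa using h (i + 1)
  · intro h i
    simpa using h (i - 1)

theorem existsUnique_add_eq_smul (e : ℤ → R) (x y : M) :
    ∃! f : ℤ → M, f 0 = x ∧ f 1 = y ∧ ∀ i, f (i - 1) + f (i + 1) = e i • f i := by
  obtain ⟨p, ⟨hp0, hp⟩, hp_unique⟩ :=
    Int.orbitOfEquiv.existsUnique (fun i => transferEquiv (M := M) (e (i + 1))) (x, y)
  have hsnd : ∀ i, (p i).2 = (p (i + 1)).1 := fun i => by rw [hp, transferEquiv_apply]
  have hpair : ∀ i, p i = ((p i).1, (p (i + 1)).1) := fun i => by rw [← hsnd]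
  refine ⟨fun i => (p i).1, ⟨by simp [hp0], ?_, ?_⟩, ?_⟩
  · change (p (0 + 1)).1 = y
    rw [← hsnd, hp0]
  · refine (forall_add_eq_smul_iff_transferEquiv e fun i => (p i).1).2 fun i => ?_
    rw [← hpair (i + 1), ← hpair i, hp]
  · rintro g ⟨hg0, hg1, hg⟩
    have hgp := hp_unique (fun i => (g i, g (i + 1)))
      ⟨by simp [hg0, hg1], (forall_add_eq_smul_iff_transferEquiv e g).1 hg⟩
    exact funext fun i => congrArg Prod.fst (congrFun hgp i)

end ThreeTermRecurrence

section Determinant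

variable {R : Type*} [CommRing R]

def wedge (u v : R × R) : R := u.1 * v.2 - u.2 * v.1

theorem wedge_transferEquiv (t : R) (u v : R × R) :
    wedge v (transferEquiv t (u, v)).2 = wedge u v := by
  simp only [wedge, transferEquiv_apply, Prod.fst_sub, Prod.snd_sub, Prod.smul_fst, Prod.smul_snd,
    smul_eq_mul]
  ring

theorem wedge_eq_wedge_zero_one {e : ℤ → R} {f : ℤ → R × R}
    (hf : ∀ i, f (i - 1) + f (i + 1) = e i • f i) (i : ℤ) :
    wedge (f i) (f (i + 1)) = wedge (f 0) (f 1) := by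
  have hper : Function.Periodic (fun i => wedge (f i) (f (i + 1))) 1 := fun i => by
    have hstep := congrArg Prod.snd ((forall_add_eq_smul_iff_transferEquiv e f).1 hf i)
    simp only at hstep ⊢
    rw [hstep, wedge_transferEquiv]
  simpa using hper.int_mul_eq i

end Determinant

theorem path_from_itinerary {R : Type*} [CommRing R] (e : ℤ → R) (a b c d : R)
    (h : a * d - b * c = 1) :
    ∃! f : ℤ → R × R,
      (∀ i : ℤ, (f i).1 * (f (i + 1)).2 - (f i).2 * (f (i + 1)).1 = 1) ∧
      f 0 = (a, b) ∧ f 1 = (c, d) ∧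
      ∀ i : ℤ, (f (i - 1)).1 + (f (i + 1)).1 = e i * (f i).1 ∧
        (f (i - 1)).2 + (f (i + 1)).2 = e i * (f i).2 := by
  obtain ⟨f, ⟨hf0, hf1, hf⟩, hf_unique⟩ := existsUnique_add_eq_smul e (a, b) (c, d)
  refine ⟨f, ⟨fun i => ?_, hf0, hf1, fun i => Prod.ext_iff.1 (hf i)⟩, ?_⟩
  · rw [← h]
    simpa [wedge, hf0, hf1] using wedge_eq_wedge_zero_one hf i
  · rintro g ⟨-, hg0, hg1, hg⟩
    exact hf_unique g ⟨hg0, hg1, fun i => Prod.ext (hg i).1 (hg i).2⟩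
end

section
/- Two bi-infinite paths in 𝓔_R with the same itinerary are equivalent under the action of SL₂(R): there exists A ∈ SL₂(R) mapping one path to the other vertexwise. -/
/-!
Both coordinates of a path satisfy the discrete Hill equation `x (i + 1) + x (i - 1) = e i * x i`
whose coefficients are the itinerary. Two paths with the same itinerary therefore solve the same
equation, so all Wronskians between their coordinates are constant in `i`. Expanding each vertex
of the second path in the unimodular basis formed by two consecutive vertices of the first one
expresses it through these constant Wronskians, which are the entries of the matrix in `SL₂(R)`.
-/

namespace BiInfinitePath

variable {R : Type*} [CommRing R]

def wronskian (x y : ℤ → R) (i : ℤ) : R := x i * y (i + 1) - y i * x (i + 1)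

def itinerary (a b : ℤ → R) (i : ℤ) : R := a (i - 1) * b (i + 1) - b (i - 1) * a (i + 1)

def SolvesHillEquation (e x : ℤ → R) : Prop := ∀ i, x (i + 1) + x (i - 1) = e i * x i

section

variable {a b : ℤ → R} (h : ∀ i, wronskian a b i = 1)
include h

theorem solvesHillEquation_itinerary_fst : SolvesHillEquation (itinerary a b) a := by
  intro i
  have h₀ := h (i - 1)
  have h₁ := h i
  simp only [wronskian, sub_add_cancel] at h₀ h₁
  simp only [itinerary]
  linear_combination -a (i + 1) * h₀ - a (i - 1) * h₁

theorem solvesHillEquation_itinerary_snd : SolvesHillEquation (itinerary a b) b := by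
  intro i
  have h₀ := h (i - 1)
  have h₁ := h i
  simp only [wronskian, sub_add_cancel] at h₀ h₁
  simp only [itinerary]
  linear_combination -b (i + 1) * h₀ - b (i - 1) * h₁

end

theorem SolvesHillEquation.wronskian_eq_wronskian_zero {e x y : ℤ → R}
    (hx : SolvesHillEquation e x) (hy : SolvesHillEquation e y) (i : ℤ) :
    wronskian x y i = wronskian x y 0 := by
  have hper : Function.Periodic (wronskian x y) 1 := by
    intro j
    have hxj := hx (j + 1)
    have hyj := hy (j + 1)
    simp only [add_sub_cancel_right] at hxj hyj
    simp only [wronskian]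
    linear_combination x (j + 1) * hyj - y (j + 1) * hxj
  simpa using hper.int_mul_eq i

theorem eq_wronskian_mul_add_wronskian_mul {a b : ℤ → R} {i : ℤ} (h : wronskian a b i = 1)
    (x : ℤ → R) : x i = wronskian x b i * a i + wronskian a x i * b i := by
  simp only [wronskian] at h ⊢
  linear_combination -x i * h

end BiInfinitePath

open BiInfinitePath in
theorem same_itinerary_sl2_equivalent {R : Type*} [CommRing R] (a b c d : ℤ → R)
    (hγ : ∀ i : ℤ, a i * b (i + 1) - b i * a (i + 1) = 1)
    (hδ : ∀ i : ℤ, c i * d (i + 1) - d i * c (i + 1) = 1)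
    (hitin : ∀ i : ℤ,
      a (i - 1) * b (i + 1) - b (i - 1) * a (i + 1) =
        c (i - 1) * d (i + 1) - d (i - 1) * c (i + 1)) :
    ∃ p q r s : R, p * s - q * r = 1 ∧
      ∀ i : ℤ, c i = p * a i + q * b i ∧ d i = r * a i + s * b i := by
  have hit : itinerary c d = itinerary a b := (funext hitin).symm
  have ha := solvesHillEquation_itinerary_fst hγ
  have hb := solvesHillEquation_itinerary_snd hγ
  have hc : SolvesHillEquation (itinerary a b) c := hit ▸ solvesHillEquation_itinerary_fst hδ
  have hd : SolvesHillEquation (itinerary a b) d := hit ▸ solvesHillEquation_itinerary_snd hδ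
  refine ⟨wronskian c b 0, wronskian a c 0, wronskian d b 0, wronskian a d 0, ?_,
    fun i => ⟨?_, ?_⟩⟩
  · have hab : wronskian a b 0 = 1 := hγ 0
    have hcd : wronskian c d 0 = 1 := hδ 0
    simp only [wronskian] at hab hcd ⊢
    -- `p * s - q * r = wronskian a b 0 * wronskian c d 0`: multiplicativity of the determinant
    linear_combination (c 0 * d (0 + 1) - d 0 * c (0 + 1)) * hab + hcd
  · rw [← hc.wronskian_eq_wronskian_zero hb i, ← ha.wronskian_eq_wronskian_zero hc i]
    exact eq_wronskian_mul_add_wronskian_mul (hγ i) c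
  · rw [← hd.wronskian_eq_wronskian_zero hb i, ← ha.wronskian_eq_wronskian_zero hd i]
    exact eq_wronskian_mul_add_wronskian_mul (hγ i) d
end

section
/- If R is a finite local ring whose only units are 1 and -1, then R is isomorphic to ℤ/2ℤ, ℤ/3ℤ, or ℤ/4ℤ. -/
theorem finite_local_ring_units_pm_one {R : Type*} [CommRing R] [Fintype R] [IsLocalRing R]
    (hU : ∀ u : Rˣ, (u : R) = 1 ∨ (u : R) = -1) :
    Nonempty (R ≃+* ZMod 2) ∨ Nonempty (R ≃+* ZMod 3) ∨ Nonempty (R ≃+* ZMod 4) := by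
  classical
  have hU2 : ∀ x : R, IsUnit x → x = 1 ∨ x = -1 := by
    intro x hx
    rcases hU hx.unit with h | h
    · left; rwa [hx.unit_spec] at h
    · right; rwa [hx.unit_spec] at h
  have hcardU : Fintype.card {x : R // IsUnit x} ≤ 2 := by
    have h := Fintype.card_le_of_injective
      (fun x : {x : R // IsUnit x} => (x.1 : R)) (fun a b hab => Subtype.ext hab)
    -- instead: embed into Finset {1, -1}
    have hsub : (Finset.univ : Finset R).filter (fun x => IsUnit x) ⊆ {1, -1} := by
      intro x hx
      simp only [Finset.mem_filter] at hx
      rcases hU2 x hx.2 with h | h <;> simp [h]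
    calc Fintype.card {x : R // IsUnit x}
        = ((Finset.univ : Finset R).filter (fun x => IsUnit x)).card :=
          Fintype.card_subtype _
      _ ≤ ({1, -1} : Finset R).card := Finset.card_le_card hsub
      _ ≤ 2 := (Finset.card_insert_le _ _).trans (by simp)
  have hone : ∀ x : R, ¬ IsUnit x → IsUnit (1 + x) := by
    intro x hx
    have h : (1 + x) + (-x) = 1 := by ring
    rcases IsLocalRing.isUnit_or_isUnit_of_add_one h with h' | h'
    · exact h'
    · exact absurd (by simpa using h'.neg) hx
  have hcardNU : Fintype.card {x : R // ¬ IsUnit x} ≤ Fintype.card {x : R // IsUnit x} := by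
    apply Fintype.card_le_of_injective
      (fun x => ⟨1 + x.1, hone x.1 x.2⟩)
    intro a b hab
    have := congrArg Subtype.val hab
    simp only at this
    exact Subtype.ext (by linear_combination this)
  have hsplit : Fintype.card {x : R // ¬ IsUnit x}
      = Fintype.card R - Fintype.card {x : R // IsUnit x} :=
    Fintype.card_subtype_compl _
  have hleR : Fintype.card {x : R // IsUnit x} ≤ Fintype.card R :=
    Fintype.card_subtype_le _
  have htotal : Fintype.card R
      = Fintype.card {x : R // IsUnit x} + Fintype.card {x : R // ¬ IsUnit x} := by omega
  have hle4 : Fintype.card R ≤ 4 := by omega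
  have hge2 : 2 ≤ Fintype.card R := Fintype.one_lt_card
  have htwo : (2 : R) = 0 → Fintype.card R ≤ 2 := by
    intro h2
    have h1 : Fintype.card {x : R // IsUnit x} ≤ 1 := by
      have hsub : (Finset.univ : Finset R).filter (fun x => IsUnit x) ⊆ {1} := by
        intro x hx
        simp only [Finset.mem_filter] at hx
        rcases hU2 x hx.2 with h | h
        · simp [h]
        · have : x = 1 := by rw [h]; linear_combination -h2
          simp [this]
      calc Fintype.card {x : R // IsUnit x}
          = ((Finset.univ : Finset R).filter (fun x => IsUnit x)).card :=
            Fintype.card_subtype _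
        _ ≤ ({1} : Finset R).card := Finset.card_le_card hsub
        _ = 1 := by simp
    omega
  interval_cases h : Fintype.card R
  · exact Or.inl ⟨(ZMod.ringEquivOfPrime R (by norm_num) h).symm⟩
  · exact Or.inr (Or.inl ⟨(ZMod.ringEquivOfPrime R (by norm_num) h).symm⟩)
  · right; right
    have h2 : (2 : R) ≠ 0 := fun hc => by have := htwo hc; omega
    have hchar := ringChar.charP R
    have hdvd : ringChar R ∣ 4 := by
      have h4 : ((4 : ℕ) : R) = 0 := by
        have := Nat.cast_card_eq_zero R
        rwa [h] at this
      exact (ringChar.spec R 4).mp h4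
    have hne1 : ringChar R ≠ 1 := CharP.ringChar_ne_one
    have hne2 : ringChar R ≠ 2 := by
      intro hc
      apply h2
      have h2' : ((2 : ℕ) : R) = 0 := by
        rw [← hc]; exact (ringChar.spec R (ringChar R)).mpr dvd_rfl
      simpa using h2'
    have h4 : ringChar R = 4 := by
      have hle := Nat.le_of_dvd (by norm_num) hdvd
      have hpos : 0 < ringChar R := Nat.pos_of_dvd_of_pos hdvd (by norm_num)
      have h3 : ringChar R ≠ 3 := by
        intro hc; rw [hc] at hdvd; norm_num at hdvd
      omega
    haveI : CharP R 4 := h4 ▸ hchar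
    exact ⟨(ZMod.ringEquiv R h).symm⟩
end

section
/- Let R be a finite local ring. For every unimodular pair (a,b) in R×R, there is a path of length exactly 3 in the Farey complex 𝓔_R from (1,0) to (a,b); i.e., there exist unimodular pairs v₁, v₂ with consecutive determinants equal to 1 along (1,0) → v₁ → v₂ → (a,b). -/
theorem local_ring_path_length_three {R : Type*} [CommRing R] [Fintype R] [IsLocalRing R]
    (a b : R) (hab : ∃ x y : R, a * x + b * y = 1) :
    ∃ c₁ d₁ c₂ d₂ : R,
      (1 : R) * d₁ - 0 * c₁ = 1 ∧ c₁ * d₂ - d₁ * c₂ = 1 ∧ c₂ * b - d₂ * a = 1 := by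
  obtain ⟨x, y, hxy⟩ := hab
  have h1 : IsUnit (a * x + b * y) := hxy ▸ isUnit_one
  have h2 : IsUnit a ∨ IsUnit b := by
    rcases IsLocalRing.isUnit_or_isUnit_of_isUnit_add h1 with h | h
    · exact Or.inl (isUnit_of_mul_isUnit_left h)
    · exact Or.inr (isUnit_of_mul_isUnit_left h)
  rcases h2 with h | h
  · obtain ⟨u, hu⟩ := h
    refine ⟨0, 1, -1, -(1 + b) * ↑u⁻¹, by ring, by ring, ?_⟩
    have : (↑u⁻¹ : R) * a = 1 := by rw [← hu]; exact u.inv_mul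
    calc (-1 : R) * b - (-(1 + b) * ↑u⁻¹) * a = -b + (1 + b) * (↑u⁻¹ * a) := by ring
    _ = 1 := by rw [this]; ring
  · obtain ⟨u, hu⟩ := h
    refine ⟨(a + 1) * ↑u⁻¹, 1, (a + 1) * ↑u⁻¹ * (1 + b) - 1, 1 + b, by ring, by ring, ?_⟩
    have hb : (↑u⁻¹ : R) * b = 1 := by rw [← hu]; exact u.inv_mul
    calc ((a + 1) * ↑u⁻¹ * (1 + b) - 1) * b - (1 + b) * a
        = (1 + b) * ((a + 1) * (↑u⁻¹ * b) - a) - b := by ring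
      _ = 1 := by rw [hb]; ring
end

section
/- The diameter of the Farey complex 𝓔_R of any finite commutative ring R is at most 3: between any two unimodular pairs there is a directed path of length at most 3. -/
/-- In a finite monoid, some positive power of any element is idempotent. -/
lemma exists_pow_idem {R : Type*} [CommMonoid R] [Finite R] (x : R) :
    ∃ m : ℕ, x ^ (m + 1) * x ^ (m + 1) = x ^ (m + 1) := by
  obtain ⟨i, j, hij, h⟩ := Finite.exists_ne_map_eq_of_infinite (fun n : ℕ => x ^ n)
  wlog hlt : i < j generalizing i j
  · exact this j i hij.symm h.symm (by omega)
  obtain ⟨k, hk, rfl⟩ : ∃ k, 1 ≤ k ∧ j = i + k := ⟨j - i, by omega, by omega⟩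
  have step : ∀ m, i ≤ m → x ^ m = x ^ (m + k) := by
    intro m hm
    obtain ⟨r, rfl⟩ : ∃ r, m = i + r := ⟨m - i, by omega⟩
    calc x ^ (i + r) = x ^ i * x ^ r := pow_add x i r
    _ = x ^ (i + k) * x ^ r := by rw [h]
    _ = x ^ (i + r + k) := by rw [← pow_add]; ring_nf
  have iter : ∀ t m, i ≤ m → x ^ m = x ^ (m + t * k) := by
    intro t
    induction t with
    | zero => simp
    | succ n ih =>
      intro m hm
      rw [ih m hm, step (m + n * k) (by omega)]
      ring_nf
  have hk1 : i + 1 ≤ (i + 1) * k := by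
    have := Nat.mul_le_mul_left (i + 1) hk; omega
  obtain ⟨m, hm⟩ : ∃ m, (i + 1) * k = m + 1 := ⟨(i + 1) * k - 1, by omega⟩
  refine ⟨m, ?_⟩
  rw [← hm, ← pow_add]
  exact (iter (i + 1) ((i + 1) * k) (by omega)).symm

/-- Key solvability lemma: if `A*B - D*K = 1` in a finite commutative ring, then the
bilinear equation `K + s*A + t*B + t*s*D = 1` has a solution. -/
lemma solve_bilinear {R : Type*} [CommRing R] [Fintype R] (D K A B : R)
    (hAB : A * B - D * K = 1) :
    ∃ s t : R, K + s * A + t * B + t * s * D = 1 := by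
  obtain ⟨m, he⟩ := exists_pow_idem D
  set n := m + 1 with hn
  set E := D ^ n with hE
  set G := ∑ i ∈ Finset.range n, (-(D * K)) ^ i with hG
  have hgeom : G * (-(D * K) - 1) = (-(D * K)) ^ n - 1 := geom_sum_mul _ n
  have hpow : (-(D * K)) ^ n = (-K) ^ n * E := by
    rw [hE, ← mul_pow]; ring_nf
  have h5 : (1 - E) * (-(D * K)) ^ n = 0 := by
    rw [hpow]; linear_combination (-(-K) ^ n) * he
  have h3 : (1 - E) * ((1 + D * K) * G) = 1 - E := by
    linear_combination (E - 1) * hgeom - h5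
  set s := D ^ m * (1 - B) with hs
  have hsD : s * D = E * (1 - B) := by
    rw [hs, hE, hn, pow_succ]; ring
  set y := E + A * G * (1 - E) with hy
  have hxy : (B + E * (1 - B)) * y = 1 := by
    rw [hy]
    linear_combination G * (1 - E) * hAB + h3 + (1 - B) * (1 - A * G) * he
  refine ⟨s, y * (1 - K - s * A), ?_⟩
  linear_combination (1 - K - s * A) * hxy + (y * (1 - K - s * A)) * hsD

theorem farey_complex_diameter_le_three {R : Type*} [CommRing R] [Fintype R]
    (a b c d : R) (hab : ∃ x y : R, a * x + b * y = 1) (hcd : ∃ x y : R, c * x + d * y = 1) :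
    (a, b) = (c, d) ∨
    a * d - b * c = 1 ∨
    (∃ u v : R, (∃ x y : R, u * x + v * y = 1) ∧ a * v - b * u = 1 ∧ u * d - v * c = 1) ∨
    (∃ u v w z : R, (∃ x y : R, u * x + v * y = 1) ∧ (∃ x y : R, w * x + z * y = 1) ∧
      a * v - b * u = 1 ∧ u * z - v * w = 1 ∧ w * d - z * c = 1) := by
  obtain ⟨x, y, h1⟩ := hab
  obtain ⟨x', y', h2⟩ := hcd
  -- p, q with a*q - b*p = 1
  set p : R := -y with hp
  set q : R := x with hq
  set D := a * d - b * c with hD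
  set B := -(a * x' + b * y') with hB
  set A := p * d - q * c with hA
  set K := -(p * x' + q * y') with hK
  have hAB : A * B - D * K = 1 := by
    rw [hA, hB, hD, hK, hp, hq]
    linear_combination (c * x' + d * y') * h1 + h2
  obtain ⟨s, t, hst⟩ := solve_bilinear D K A B hAB
  refine Or.inr (Or.inr (Or.inr ⟨p + t * a, q + t * b, y' + s * c, -x' + s * d,
    ⟨-b, a, ?_⟩, ⟨d, -c, ?_⟩, ?_, ?_, ?_⟩))
  · rw [hp, hq]; linear_combination h1
  · linear_combination h2
  · rw [hp, hq]; linear_combination h1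
  · rw [hK, hA, hB, hD] at hst; linear_combination hst
  · linear_combination h2
end

section
/- An SL₂-tiling M over a commutative ring R is tame if and only if there exist bi-infinite sequences (rᵢ) and (sⱼ) in R such that m_{i-1,j} + m_{i+1,j} = rᵢ·m_{i,j} and m_{i,j-1} + m_{i,j+1} = sⱼ·m_{i,j} for all i,j ∈ ℤ; moreover if M is tame these sequences are unique. -/
/-!
In an SL₂-tiling, the 2 × 2 determinant `rowCoef m i j` of rows `i - 1, i + 1` at columns `j, j + 1`
is the coefficient of the three-term relation `m (i-1) k + m (i+1) k = rowCoef m i j * m i k`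
for both `k = j` and `k = j + 1`. Subtracting this relation from the top row of the 3 × 3 window
at `(i, j)` leaves `(rowCoef m i (j-1) - rowCoef m i j) * m i (j-1)` as its determinant.
The difference of the two coefficients also kills `m i j`, and `(m i (j-1), m i j)` is a unimodular
pair, so the window determinant vanishes exactly when `rowCoef m i` takes the same value at `j - 1`
and `j`. The coefficient is forced by any three-term relation, which gives uniqueness, and columns
are handled by transposing the tiling.
-/

open Function
open scoped Matrix

namespace SL2Tiling

variable {R : Type*}

def window (m : ℤ → ℤ → R) (i j : ℤ) : Matrix (Fin 3) (Fin 3) R :=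
  !![m (i - 1) (j - 1), m (i - 1) j, m (i - 1) (j + 1);
     m i (j - 1), m i j, m i (j + 1);
     m (i + 1) (j - 1), m (i + 1) j, m (i + 1) (j + 1)]

lemma window_swap (m : ℤ → ℤ → R) (i j : ℤ) : window (swap m) i j = (window m j i)ᵀ := by
  ext a b
  fin_cases a <;> fin_cases b <;> rfl

variable [CommRing R]

def rowCoef (m : ℤ → ℤ → R) (i j : ℤ) : R :=
  m (i - 1) j * m (i + 1) (j + 1) - m (i - 1) (j + 1) * m (i + 1) j

lemma det_window_eq_zero_of_row_recurrence (m : ℤ → ℤ → R) (r : R) (i j : ℤ)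
    (hr : ∀ k, m (i - 1) k + m (i + 1) k = r * m i k) : (window m i j).det = 0 := by
  simp only [window, Matrix.det_fin_three, Matrix.of_apply, Matrix.cons_val]
  linear_combination
    (m i j * m (i + 1) (j + 1) - m i (j + 1) * m (i + 1) j) * hr (j - 1)
      - (m i (j - 1) * m (i + 1) (j + 1) - m i (j + 1) * m (i + 1) (j - 1)) * hr j
      + (m i (j - 1) * m (i + 1) j - m i j * m (i + 1) (j - 1)) * hr (j + 1)

section Tiling

variable {m : ℤ → ℤ → R}
  (hSL : ∀ i j : ℤ, m i j * m (i + 1) (j + 1) - m i (j + 1) * m (i + 1) j = 1)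
include hSL

lemma add_eq_rowCoef_mul (i j : ℤ) :
    m (i - 1) j + m (i + 1) j = rowCoef m i j * m i j := by
  have h := hSL (i - 1) j
  rw [sub_add_cancel] at h
  unfold rowCoef
  linear_combination -m (i - 1) j * hSL i j - m (i + 1) j * h

lemma add_eq_rowCoef_mul_succ (i j : ℤ) :
    m (i - 1) (j + 1) + m (i + 1) (j + 1) = rowCoef m i j * m i (j + 1) := by
  have h := hSL (i - 1) j
  rw [sub_add_cancel] at h
  unfold rowCoef
  linear_combination -m (i - 1) (j + 1) * hSL i j - m (i + 1) (j + 1) * h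

lemma det_window (i j : ℤ) :
    (window m i j).det = (rowCoef m i (j - 1) - rowCoef m i j) * m i (j - 1) := by
  have h₀ := add_eq_rowCoef_mul hSL i (j - 1)
  have h₁ := add_eq_rowCoef_mul hSL i j
  have h₂ := add_eq_rowCoef_mul_succ hSL i j
  simp only [window, Matrix.det_fin_three, Matrix.of_apply, Matrix.cons_val]
  linear_combination
    (m i j * m (i + 1) (j + 1) - m i (j + 1) * m (i + 1) j) * h₀
      - (m i (j - 1) * m (i + 1) (j + 1) - m i (j + 1) * m (i + 1) (j - 1)) * h₁
      + (m i (j - 1) * m (i + 1) j - m i j * m (i + 1) (j - 1)) * h₂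
      + (rowCoef m i (j - 1) - rowCoef m i j) * m i (j - 1) * hSL i j

lemma rowCoef_sub_one_eq_of_det_window_eq_zero {i j : ℤ} (h : (window m i j).det = 0) :
    rowCoef m i (j - 1) = rowCoef m i j := by
  have hleft : (rowCoef m i (j - 1) - rowCoef m i j) * m i (j - 1) = 0 :=
    (det_window hSL i j).symm.trans h
  have hmid := add_eq_rowCoef_mul_succ hSL i (j - 1)
  have hunimod := hSL i (j - 1)
  rw [sub_add_cancel] at hmid hunimod
  linear_combination
    m (i + 1) j * hleft + m (i + 1) (j - 1) * (hmid - add_eq_rowCoef_mul hSL i j)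
      - (rowCoef m i (j - 1) - rowCoef m i j) * hunimod

lemma exists_row_recurrence (htame : ∀ i j, (window m i j).det = 0) :
    ∃ r : ℤ → R, ∀ i j, m (i - 1) j + m (i + 1) j = r i * m i j := by
  refine ⟨fun i => rowCoef m i 0, fun i j => ?_⟩
  have hper : Periodic (rowCoef m i) 1 := fun j => by
    simpa using (rowCoef_sub_one_eq_of_det_window_eq_zero hSL (htame i (j + 1))).symm
  calc m (i - 1) j + m (i + 1) j = rowCoef m i j * m i j := add_eq_rowCoef_mul hSL i j
    _ = rowCoef m i 0 * m i j := by rw [← hper.zsmul_eq j, zsmul_one, Int.cast_id]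

lemma eq_rowCoef_of_row_recurrence {r : R} {i : ℤ}
    (hr : ∀ j, m (i - 1) j + m (i + 1) j = r * m i j) : r = rowCoef m i 0 := by
  have h := hSL (i - 1) 0
  rw [sub_add_cancel, zero_add] at h
  unfold rowCoef
  rw [zero_add]
  linear_combination -r * h - m (i - 1) 0 * hr 1 + m (i - 1) 1 * hr 0

end Tiling

end SL2Tiling

open SL2Tiling

theorem tame_iff_linear_recurrences {R : Type*} [CommRing R] (m : ℤ → ℤ → R)
    (hSL : ∀ i j : ℤ, m i j * m (i + 1) (j + 1) - m i (j + 1) * m (i + 1) j = 1) :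
    ((∀ i j : ℤ,
        Matrix.det !![m (i - 1) (j - 1), m (i - 1) j, m (i - 1) (j + 1);
                      m i (j - 1), m i j, m i (j + 1);
                      m (i + 1) (j - 1), m (i + 1) j, m (i + 1) (j + 1)] = 0) ↔
      ∃ r s : ℤ → R, ∀ i j : ℤ,
        m (i - 1) j + m (i + 1) j = r i * m i j ∧
        m i (j - 1) + m i (j + 1) = s j * m i j) ∧
    ((∀ i j : ℤ,
        Matrix.det !![m (i - 1) (j - 1), m (i - 1) j, m (i - 1) (j + 1);
                      m i (j - 1), m i j, m i (j + 1);
                      m (i + 1) (j - 1), m (i + 1) j, m (i + 1) (j + 1)] = 0) →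
      ∀ r s r' s' : ℤ → R,
        (∀ i j : ℤ, m (i - 1) j + m (i + 1) j = r i * m i j ∧
          m i (j - 1) + m i (j + 1) = s j * m i j) →
        (∀ i j : ℤ, m (i - 1) j + m (i + 1) j = r' i * m i j ∧
          m i (j - 1) + m i (j + 1) = s' j * m i j) →
        r = r' ∧ s = s') := by
  have hSLswap :
      ∀ i j, swap m i j * swap m (i + 1) (j + 1) - swap m i (j + 1) * swap m (i + 1) j = 1 :=
    fun i j => by linear_combination hSL j i
  refine ⟨⟨fun htame => ?_, fun ⟨r, s, hrs⟩ i j => ?_⟩, fun _ r s r' s' hrs hrs' => ?_⟩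
  · have htameSwap : ∀ i j, (window (swap m) i j).det = 0 := fun i j => by
      rw [window_swap, Matrix.det_transpose]
      exact htame j i
    obtain ⟨r, hr⟩ := exists_row_recurrence hSL htame
    obtain ⟨s, hs⟩ := exists_row_recurrence hSLswap htameSwap
    exact ⟨r, s, fun i j => ⟨hr i j, hs j i⟩⟩
  · exact det_window_eq_zero_of_row_recurrence m (r i) i j fun k => (hrs i k).1
  · refine ⟨funext fun i => ?_, funext fun j => ?_⟩
    · rw [eq_rowCoef_of_row_recurrence hSL fun k => (hrs i k).1,
        eq_rowCoef_of_row_recurrence hSL fun k => (hrs' i k).1]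
    · rw [eq_rowCoef_of_row_recurrence hSLswap fun k => (hrs k j).2,
        eq_rowCoef_of_row_recurrence hSLswap fun k => (hrs' k j).2]
end

section
/- Let γ and δ be bi-infinite paths in 𝓔_R with vertices (aᵢ,bᵢ) and (cⱼ,dⱼ). Define m_{i,j} = aᵢdⱼ - bᵢcⱼ. Then M = (m_{i,j}) is a tame SL₂-tiling over R: every 2×2 contiguous submatrix has determinant 1 and every 3×3 contiguous submatrix has determinant 0. -/
theorem pair_of_paths_gives_tame_tiling {R : Type*} [CommRing R] (a b c d : ℤ → R)
    (hγ : ∀ i : ℤ, a i * b (i + 1) - b i * a (i + 1) = 1)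
    (hδ : ∀ j : ℤ, c j * d (j + 1) - d j * c (j + 1) = 1) :
    ∀ i j : ℤ,
      let m : ℤ → ℤ → R := fun i j => a i * d j - b i * c j
      m i j * m (i + 1) (j + 1) - m i (j + 1) * m (i + 1) j = 1 ∧
      Matrix.det !![m (i - 1) (j - 1), m (i - 1) j, m (i - 1) (j + 1);
                    m i (j - 1), m i j, m i (j + 1);
                    m (i + 1) (j - 1), m (i + 1) j, m (i + 1) (j + 1)] = 0 := by
  intro i j m
  constructor
  · simp only [m]
    linear_combination (c j * d (j + 1) - d j * c (j + 1)) * hγ i + hδ j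
  · rw [Matrix.det_fin_three]
    simp only [m, Matrix.cons_val_zero, Matrix.cons_val_one, Matrix.head_cons,
      Matrix.cons_val_two, Matrix.tail_cons, Matrix.head_fin_const, Matrix.of_apply,
      Matrix.cons_val']
    ring
end

section
/- Let F be a frieze of width n over a commutative ring R. Then m_{i+1,i} = α^((-1)^i) for all i ∈ ℤ, where α = m_{1,0}; in particular α is a unit. Similarly m_{i+n-1,i} = β^((-1)^i) where β = m_{n-1,0}. -/
/-!
On the top and bottom edges of a frieze one product of the diamond rule vanishes, leaving
`m (i+1) i * m (i+2) (i+1) = 1` and `m (i+n-1) i * m (i+n) (i+1) = 1`. A bi-infinite sequence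
whose consecutive products are `1` alternates between a unit and its inverse.
-/

theorem Units.exists_eq_zpow_negOnePow_of_mul_succ_eq_one {M : Type*} [Monoid M] (u : ℤ → M)
    (h : ∀ i, u i * u (i + 1) = 1) :
    ∃ α : Mˣ, (α : M) = u 0 ∧ ∀ i, u i = ((α ^ (i.negOnePow : ℤ) : Mˣ) : M) := by
  have h_left : u 1 * u 0 = 1 := by
    have hu : u (-1) = u 1 := left_inv_eq_right_inv (h (-1)) (h 0)
    simpa [hu] using h (-1)
  refine ⟨⟨u 0, u 1, h 0, h_left⟩, rfl, fun i => ?_⟩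
  induction i using Int.induction_on with
  | zero => simp
  | succ k ih =>
    rw [Int.negOnePow_succ, Units.val_neg, zpow_neg]
    exact (Units.inv_eq_of_mul_eq_one_right (ih ▸ h k)).symm
  | pred k ih =>
    have hk := h (-k - 1)
    rw [sub_add_cancel, ih] at hk
    rw [← Int.negOnePow_neg, neg_sub', sub_neg_eq_add, Int.negOnePow_succ, Int.negOnePow_neg,
      Units.val_neg, zpow_neg]
    exact (Units.inv_eq_of_mul_eq_one_left hk).symm

section Frieze

variable {R : Type*} [CommRing R] {n : ℤ} {m : ℤ → ℤ → R}

theorem frieze_second_row_mul_succ (hn : 2 ≤ n) (htop : ∀ i : ℤ, m i i = 0)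
    (hdiamond : ∀ i j : ℤ, 0 < i - j → i - j < n →
      m i j * m (i + 1) (j + 1) - m i (j + 1) * m (i + 1) j = 1) (i : ℤ) :
    m (i + 1) i * m (i + 1 + 1) (i + 1) = 1 := by
  have hd := hdiamond (i + 1) i (by omega) (by omega)
  rwa [htop, zero_mul, sub_zero] at hd

theorem frieze_penultimate_row_mul_succ (hn : 2 ≤ n) (hbot : ∀ i : ℤ, m (n + i) i = 0)
    (hdiamond : ∀ i j : ℤ, 0 < i - j → i - j < n →
      m i j * m (i + 1) (j + 1) - m i (j + 1) * m (i + 1) j = 1) (i : ℤ) :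
    m (i + n - 1) i * m (i + 1 + n - 1) (i + 1) = 1 := by
  have hd := hdiamond (i + n - 1) i (by omega) (by omega)
  rwa [show i + n - 1 + 1 = n + i by ring, hbot, mul_zero, sub_zero,
    show n + i = i + 1 + n - 1 by ring] at hd

end Frieze

theorem frieze_second_and_penultimate_rows {R : Type*} [CommRing R] (n : ℤ) (hn : 2 ≤ n)
    (m : ℤ → ℤ → R)
    (htop : ∀ i : ℤ, m i i = 0) (hbot : ∀ i : ℤ, m (n + i) i = 0)
    (hdiamond : ∀ i j : ℤ, 0 < i - j → i - j < n →
      m i j * m (i + 1) (j + 1) - m i (j + 1) * m (i + 1) j = 1) :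
    ∃ α β : Rˣ, (α : R) = m 1 0 ∧ (β : R) = m (n - 1) 0 ∧
      ∀ i : ℤ,
        m (i + 1) i = ((α ^ ((((-1 : ℤˣ) ^ i : ℤˣ) : ℤ)) : Rˣ) : R) ∧
        m (i + n - 1) i = ((β ^ ((((-1 : ℤˣ) ^ i : ℤˣ) : ℤ)) : Rˣ) : R) := by
  obtain ⟨α, hα, hαi⟩ := Units.exists_eq_zpow_negOnePow_of_mul_succ_eq_one _
    (frieze_second_row_mul_succ hn htop hdiamond)
  obtain ⟨β, hβ, hβi⟩ := Units.exists_eq_zpow_negOnePow_of_mul_succ_eq_one _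
    (frieze_penultimate_row_mul_succ hn hbot hdiamond)
  exact ⟨α, β, by simpa using hα, by simpa using hβ, fun i => ⟨hαi i, hβi i⟩⟩
end

section
/- Let γ = ⟨v₀, v₁, ..., v_m⟩ with m ≥ 2 be a closed path in the Farey graph over ℤ (vertices reduced fractions a/b including 1/0, edges between a/b and c/d iff |ad-bc|=1), with v₀ = 1/0. If for every i with 1 ≤ i < m, v_{i+1} ≠ v_{i-1} and v_{i-1}, v_i, v_{i+1} are not mutually adjacent, then writing vᵢ = aᵢ/bᵢ with aᵢ₊₁ = λᵢaᵢ - aᵢ₋₁, bᵢ₊₁ = λᵢbᵢ - bᵢ₋₁, all λᵢ satisfy |λᵢ| ≥ 2, and the sequence |b₀|, |b₁|, ..., |b_m| is strictly increasing from index 1 on; hence v_m ≠ v₀, a contradiction. Conclude: every closed path in the Farey graph over ℤ admits an elementary homotopy (removal of a spur or an elementary deformation across a triangle), i.e., every closed path is strongly contractible. -/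
/-- Coprime pairs of integers up to sign: vertices of the Farey graph 𝓕_ℤ
(non-coprime classes are isolated and never occur on edges). -/
def FareySetoid : Setoid (ℤ × ℤ) where
  r p q := q = p ∨ q = (-p.1, -p.2)
  iseqv := by
    constructor
    · intro p; exact Or.inl rfl
    · rintro p q (rfl | rfl)
      · exact Or.inl rfl
      · right; simp
    · rintro p q r (rfl | rfl) (rfl | rfl)
      · exact Or.inl rfl
      · right; rfl
      · right; rfl
      · left; simp

def FareyVertex : Type := Quotient FareySetoid

/-- Adjacency in the Farey graph over ℤ: two classes are adjacent iff they have
coprime representatives `(a,b)`, `(c,d)` with `a*d - b*c = ±1`. -/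
def FareyAdj (u v : FareyVertex) : Prop :=
  ∃ p q : ℤ × ℤ, Quotient.mk FareySetoid p = u ∧ Quotient.mk FareySetoid q = v ∧
    IsCoprime p.1 p.2 ∧ IsCoprime q.1 q.2 ∧
    (p.1 * q.2 - p.2 * q.1 = 1 ∨ p.1 * q.2 - p.2 * q.1 = -1)

/-- Elementary homotopies of paths in the Farey graph: removal of a spur, or an
elementary deformation across a triangle. -/
inductive FareyHomotopy : List FareyVertex → List FareyVertex → Prop
  | spur (l₁ l₂ : List FareyVertex) (u v : FareyVertex) (h : FareyAdj v u) :
      FareyHomotopy (l₁ ++ v :: u :: v :: l₂) (l₁ ++ v :: l₂)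
  | tri (l₁ l₂ : List FareyVertex) (u v w : FareyVertex)
      (h1 : FareyAdj u v) (h2 : FareyAdj v w) (h3 : FareyAdj u w) :
      FareyHomotopy (l₁ ++ u :: v :: w :: l₂) (l₁ ++ u :: w :: l₂)

/-- A closed path: nonempty, consecutive vertices adjacent, first vertex = last vertex. -/
def IsClosedFareyPath (l : List FareyVertex) : Prop :=
  l ≠ [] ∧ l.Chain' FareyAdj ∧ l.head? = l.getLast?

/-!
Lift a closed path `v₀, …, v_m` to primitive vectors `p₀, …, p_m` of `ℤ²` with
`det (pᵢ, pᵢ₊₁) = 1`. Then `pᵢ₊₁ = λᵢ pᵢ - pᵢ₋₁` with `λᵢ = det (pᵢ₋₁, pᵢ₊₁)`: `λᵢ = 0` is a spur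
and `λᵢ = ±1` a triangle. If neither occurs, `|λᵢ| ≥ 2` throughout and the recurrence makes
`|det (p₀, pᵢ)|` (the denominator of `vᵢ` once `v₀` is moved to `1/0`) strictly increasing, which
contradicts `p_m = ±p₀`. So every closed path with an edge admits an elementary homotopy, and
elementary homotopies shorten closed paths.
-/

def FareyVertex.mk (p : ℤ × ℤ) : FareyVertex := Quotient.mk FareySetoid p

lemma FareyVertex.exists_mk_eq (v : FareyVertex) : ∃ p, FareyVertex.mk p = v :=
  Quotient.exists_rep v

namespace Farey

open FareyVertex

def det (p q : ℤ × ℤ) : ℤ := p.1 * q.2 - p.2 * q.1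

@[simp]
lemma det_self (p : ℤ × ℤ) : det p p = 0 := by
  simp only [det]; ring

@[simp]
lemma det_neg_right (p q : ℤ × ℤ) : det p (-q) = -det p q := by
  simp only [det, Prod.fst_neg, Prod.snd_neg]; ring

lemma mk_eq_mk_iff {p q : ℤ × ℤ} : mk p = mk q ↔ q = p ∨ q = -p :=
  Quotient.eq (r := FareySetoid)

lemma det_eq_zero_of_mk_eq {p q : ℤ × ℤ} (h : mk q = mk p) : det p q = 0 := by
  rcases mk_eq_mk_iff.mp h.symm with rfl | rfl <;> simp

lemma fareyAdj_mk_iff {p q : ℤ × ℤ} :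
    FareyAdj (mk p) (mk q) ↔ det p q = 1 ∨ det p q = -1 := by
  constructor
  · rintro ⟨p', q', hp, hq, -, -, hpq⟩
    rcases mk_eq_mk_iff.mp hp with rfl | rfl <;> rcases mk_eq_mk_iff.mp hq with rfl | rfl <;>
      simp only [det, Prod.fst_neg, Prod.snd_neg, neg_mul, mul_neg, neg_neg] at hpq ⊢ <;> omega
  · rintro (h | h) <;> refine ⟨p, q, rfl, rfl, ?_, ?_, ?_⟩ <;> simp only [det] at h
    all_goals first
      | exact ⟨q.2, -q.1, by linarith⟩ | exact ⟨-q.2, q.1, by linarith⟩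
      | exact ⟨-p.2, p.1, by linarith⟩ | exact ⟨p.2, -p.1, by linarith⟩ | omega

lemma exists_mk_eq_and_det_eq_one {p : ℤ × ℤ} {v : FareyVertex} (h : FareyAdj (mk p) v) :
    ∃ q, mk q = v ∧ det p q = 1 := by
  obtain ⟨q, rfl⟩ := exists_mk_eq v
  rcases fareyAdj_mk_iff.mp h with h | h
  · exact ⟨q, rfl, h⟩
  · exact ⟨-q, mk_eq_mk_iff.mpr (Or.inr (neg_neg q).symm), by simp [h]⟩

lemma eq_det_smul_sub {a b c : ℤ × ℤ} (hab : det a b = 1) (hbc : det b c = 1) :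
    c = det a c • b - a := by
  simp only [det] at *
  ext <;> simp only [Prod.smul_fst, Prod.smul_snd, Prod.fst_sub, Prod.snd_sub, smul_eq_mul]
  · linear_combination (-c.1) * hab - a.1 * hbc
  · linear_combination (-c.2) * hab - a.2 * hbc

lemma det_eq_det_mul_sub {a b c : ℤ × ℤ} (o : ℤ × ℤ) (hab : det a b = 1)
    (hbc : det b c = 1) : det o c = det a c * det o b - det o a := by
  have hc := eq_det_smul_sub hab hbc
  rw [Prod.ext_iff] at hc
  simp only [Prod.smul_fst, Prod.smul_snd, Prod.fst_sub, Prod.snd_sub, smul_eq_mul, det] at hc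
  simp only [det]
  linear_combination o.1 * hc.2 - o.2 * hc.1

lemma exists_fareyHomotopy_of_abs_det_lt_two (l₁ l₂ : List FareyVertex) {a b c : ℤ × ℤ}
    (hab : det a b = 1) (hbc : det b c = 1) (hac : |det a c| < 2) :
    ∃ l', FareyHomotopy (l₁ ++ mk a :: mk b :: mk c :: l₂) l' := by
  have hadj_ab : FareyAdj (mk a) (mk b) := fareyAdj_mk_iff.mpr (Or.inl hab)
  rw [abs_lt] at hac
  obtain h0 | hac_unit : det a c = 0 ∨ det a c = 1 ∨ det a c = -1 := by omega
  · have hca : mk c = mk a :=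
      mk_eq_mk_iff.mpr (Or.inr (by rw [eq_det_smul_sub hab hbc, h0]; simp))
    rw [hca]
    exact ⟨_, .spur l₁ l₂ _ _ hadj_ab⟩
  · exact ⟨_, .tri l₁ l₂ _ _ _ hadj_ab (fareyAdj_mk_iff.mpr (Or.inl hbc))
      (fareyAdj_mk_iff.mpr hac_unit)⟩

lemma abs_det_lt_abs_det_getLast (o : ℤ × ℤ) {a b : ℤ × ℤ} {t : List (ℤ × ℤ)}
    (hchain : (a :: b :: t).IsChain (fun p q => det p q = 1))
    (hturn : ∀ s₁ p q r s₂, a :: b :: t = s₁ ++ p :: q :: r :: s₂ → 2 ≤ |det p r|)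
    (hab : |det o a| < |det o b|) :
    |det o a| < |det o ((b :: t).getLast (List.cons_ne_nil _ _))| := by
  induction t generalizing a b with
  | nil => simpa using hab
  | cons c t ih =>
    obtain ⟨hab₁, hbc₁, -⟩ :=
      List.isChain_cons_cons.mp hchain |>.imp_right List.isChain_cons_cons.mp
    have hturn_abc : 2 ≤ |det a c| := hturn [] a b c t rfl
    have hbc : |det o b| < |det o c| :=
      calc |det o b| < 2 * |det o b| - |det o a| := by linarith
        _ ≤ |det a c| * |det o b| - |det o a| := by gcongr
        _ = |det a c * det o b| - |det o a| := by rw [abs_mul]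
        _ ≤ |det o c| := det_eq_det_mul_sub o hab₁ hbc₁ ▸ abs_sub_abs_le_abs_sub _ _
    have hlast :=
      ih hchain.tail (fun s₁ p q r s₂ h => hturn (a :: s₁) p q r s₂ (by rw [h]; rfl)) hbc
    rw [List.getLast_cons (List.cons_ne_nil _ _)]
    exact hab.trans hlast

lemma exists_lift_of_isChain_fareyAdj {p : ℤ × ℤ} {t : List FareyVertex}
    (h : (mk p :: t).IsChain FareyAdj) :
    ∃ qs : List (ℤ × ℤ), qs.map mk = t ∧ (p :: qs).IsChain (fun a b => det a b = 1) := by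
  induction t generalizing p with
  | nil => exact ⟨[], rfl, .singleton p⟩
  | cons v t ih =>
    rw [List.isChain_cons_cons] at h
    obtain ⟨q, rfl, hpq⟩ := exists_mk_eq_and_det_eq_one h.1
    obtain ⟨qs, rfl, hqs⟩ := ih h.2
    exact ⟨q :: qs, rfl, hqs.cons_cons hpq⟩

end Farey

lemma FareyHomotopy.length_lt {l l' : List FareyVertex} (h : FareyHomotopy l l') :
    l'.length < l.length := by
  cases h <;> simp

lemma FareyHomotopy.isClosedFareyPath {l l' : List FareyVertex} (h : FareyHomotopy l l')
    (hl : IsClosedFareyPath l) : IsClosedFareyPath l' := by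
  obtain ⟨-, hch, hcl⟩ := hl
  have hchain : l.IsChain FareyAdj := hch
  cases h <;>
    refine ⟨by simp, ?_, by simpa [List.getLast?_append, List.getLast?_cons_cons] using hcl⟩ <;>
    show List.IsChain _ _ <;> simp_all [List.isChain_append]

open Farey FareyVertex in
lemma IsClosedFareyPath.exists_fareyHomotopy {l : List FareyVertex} (hl : IsClosedFareyPath l)
    (hlen : 2 ≤ l.length) : ∃ l', FareyHomotopy l l' := by
  by_contra hirr
  obtain ⟨-, hch, hcl⟩ := hl
  rcases l with _ | ⟨v, t⟩
  · simp at hlen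
  obtain ⟨p, rfl⟩ := exists_mk_eq v
  obtain ⟨_ | ⟨q, qs⟩, rfl, hchain⟩ := exists_lift_of_isChain_fareyAdj (p := p) (t := t) hch
  · simp at hlen
  have hturn : ∀ s₁ a b c s₂, p :: q :: qs = s₁ ++ a :: b :: c :: s₂ → 2 ≤ |det a c| := by
    intro s₁ a b c s₂ hs
    have habc := (hs ▸ hchain).right_of_append
    rw [List.isChain_cons_cons, List.isChain_cons_cons] at habc
    by_contra! hac
    have hmap := congrArg (List.map mk) hs
    rw [List.map_cons, List.map_append, List.map_cons, List.map_cons, List.map_cons] at hmap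
    exact hirr (hmap ▸ exists_fareyHomotopy_of_abs_det_lt_two _ _ habc.1 habc.2.1 hac)
  have hgrow := abs_det_lt_abs_det_getLast p hchain hturn
    (by simp [(List.isChain_cons_cons.mp hchain).1])
  have hlast : mk ((q :: qs).getLast (List.cons_ne_nil _ _)) = mk p := by
    rw [← List.map_cons, List.head?_map, List.getLast?_map, List.getLast?_cons_cons,
      List.getLast?_eq_some_getLast (List.cons_ne_nil q qs)] at hcl
    simpa using hcl.symm
  simp [det_eq_zero_of_mk_eq hlast] at hgrow

/-- Every closed path in the Farey graph over ℤ is strongly contractible. -/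
theorem closed_farey_paths_strongly_contractible (l : List FareyVertex)
    (hl : IsClosedFareyPath l) :
    ∃ v : FareyVertex, Relation.ReflTransGen FareyHomotopy l [v] := by
  induction hn : l.length using Nat.strong_induction_on generalizing l with
  | _ n ih =>
    rcases lt_or_ge l.length 2 with hlt | hge
    · obtain ⟨v, rfl⟩ : ∃ v, l = [v] :=
        List.length_eq_one_iff.mp (by have := List.length_pos_iff.mpr hl.1; omega)
      exact ⟨v, .refl⟩
    · obtain ⟨l', hll'⟩ := hl.exists_fareyHomotopy hge
      obtain ⟨v, hv⟩ := ih _ (hn ▸ hll'.length_lt) l' (hll'.isClosedFareyPath hl) rfl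
      exact ⟨v, .head hll' hv⟩
end
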